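/- arXiv:2105.10442 — 13 statements merged into one kernel-verified Lean document; each statement's English description precedes it below -/
import Mathlib

section
/- Let f : ℝ × ℝ → ℝ be continuously differentiable and g : ℝ → ℝ be continuously differentiable. Then for all τ, ξ ∈ ℝ, f(τ, τ+ξ)·g(τ+ξ) − f(τ−ξ, τ)·g(τ) = ξ · (d/dτ) ∫₀¹ f(τ+(η−1)ξ, τ+ηξ)·g(τ+ηξ) dη; that is, the function τ ↦ ∫₀¹ f(τ+(η−1)ξ, τ+ηξ)·g(τ+ηξ) dη is differentiable and ξ times its derivative at τ equals f(τ, τ+ξ)·g(τ+ξ) − f(τ−ξ, τ)·g(τ). -/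
open MeasureTheory

/-!
Along the segment `η ↦ (t + (η - 1) ξ, t + η ξ)` the integrand is `H (t + η ξ)` with
`H s = f (s - ξ, s) g s`. For `ξ ≠ 0` the substitution `u = t + η ξ` turns the η-integral into
`ξ⁻¹ ∫_t^{t+ξ} H`, whose τ-derivative is `ξ⁻¹ (H (τ + ξ) - H τ)` by the fundamental theorem of
calculus. For `ξ = 0` the integral is `H t` itself.
-/

section SegmentAverage

variable {E : Type*} [NormedAddCommGroup E] [NormedSpace ℝ E] {H : ℝ → E}

theorem intervalIntegral_unit_comp_add_mul {ξ : ℝ} (hξ : ξ ≠ 0) (t : ℝ) :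
    ∫ η in (0:ℝ)..1, H (t + η * ξ) = ξ⁻¹ • ∫ u in t..t + ξ, H u := by
  simp_rw [mul_comm _ ξ]
  rw [intervalIntegral.integral_comp_add_mul H hξ t, mul_zero, mul_one, add_zero]

theorem hasDerivAt_intervalIntegral_add_right [CompleteSpace E] (hH : Continuous H) (ξ τ : ℝ) :
    HasDerivAt (fun t => ∫ u in t..t + ξ, H u) (H (τ + ξ) - H τ) τ := by
  have hprimitive : ∀ x, HasDerivAt (fun u => ∫ s in (0:ℝ)..u, H s) (H x) x := fun x =>
    (hH.integral_hasStrictDerivAt 0 x).hasDerivAt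
  have hdiff : (fun t => ∫ u in t..t + ξ, H u) =
      fun t => (∫ u in (0:ℝ)..t + ξ, H u) - ∫ u in (0:ℝ)..t, H u := by
    funext t
    rw [intervalIntegral.integral_interval_sub_left (hH.intervalIntegrable _ _)
      (hH.intervalIntegrable _ _)]
  rw [hdiff]
  exact ((hprimitive (τ + ξ)).comp_add_const τ ξ).sub (hprimitive τ)

theorem hasDerivAt_intervalIntegral_unit_comp_add_mul [CompleteSpace E] (hH : Continuous H)
    {ξ : ℝ} (hξ : ξ ≠ 0) (τ : ℝ) :
    HasDerivAt (fun t => ∫ η in (0:ℝ)..1, H (t + η * ξ)) (ξ⁻¹ • (H (τ + ξ) - H τ)) τ := by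
  simp_rw [intervalIntegral_unit_comp_add_mul hξ]
  exact (hasDerivAt_intervalIntegral_add_right hH ξ τ).const_smul ξ⁻¹

theorem differentiableAt_intervalIntegral_unit_comp_add_mul_and_smul_deriv [CompleteSpace E]
    (hH : Continuous H) {τ : ℝ} (hHτ : DifferentiableAt ℝ H τ) (ξ : ℝ) :
    DifferentiableAt ℝ (fun t => ∫ η in (0:ℝ)..1, H (t + η * ξ)) τ ∧
      ξ • deriv (fun t => ∫ η in (0:ℝ)..1, H (t + η * ξ)) τ = H (τ + ξ) - H τ := by
  rcases eq_or_ne ξ 0 with rfl | hξ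
  · simpa using hHτ
  · have hderiv := hasDerivAt_intervalIntegral_unit_comp_add_mul hH hξ τ
    exact ⟨hderiv.differentiableAt, by rw [hderiv.deriv, smul_inv_smul₀ hξ]⟩

end SegmentAverage

/-- Integral-representation trick used in the proof of the non-local Noether theorem:
the difference of the integrand at shifted arguments is a total τ-derivative of an
integral over the interpolation parameter η ∈ [0,1]. -/
theorem stmt0 (f : ℝ × ℝ → ℝ) (g : ℝ → ℝ)
    (hf : ContDiff ℝ 1 f) (hg : ContDiff ℝ 1 g) (τ ξ : ℝ) :
    DifferentiableAt ℝ
      (fun t : ℝ => ∫ η in (0:ℝ)..1, f (t + (η - 1) * ξ, t + η * ξ) * g (t + η * ξ)) τ ∧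
    ξ * deriv (fun t : ℝ => ∫ η in (0:ℝ)..1, f (t + (η - 1) * ξ, t + η * ξ) * g (t + η * ξ)) τ
      = f (τ, τ + ξ) * g (τ + ξ) - f (τ - ξ, τ) * g τ := by
  set H : ℝ → ℝ := fun s => f (s - ξ, s) * g s
  have hH : ContDiff ℝ 1 H :=
    (hf.comp ((contDiff_id.sub contDiff_const).prodMk contDiff_id)).mul hg
  have hintegrand : ∀ t η : ℝ,
      f (t + (η - 1) * ξ, t + η * ξ) * g (t + η * ξ) = H (t + η * ξ) := fun t η => by
    simp only [H, sub_one_mul, add_sub_assoc]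
  simp_rw [hintegrand]
  simpa [H] using differentiableAt_intervalIntegral_unit_comp_add_mul_and_smul_deriv
    hH.continuous (hH.differentiable one_ne_zero τ) ξ
end

section
/- Let λ : ℝ × ℝ → ℝ and v : ℝ → ℝ be continuous with compact support, and let θ : ℝ → ℝ denote the Heaviside step function (θ(x) = 1 for x ≥ 0 and θ(x) = 0 for x < 0). Then for every τ ∈ ℝ, ∫_ℝ ( ∫_τ^{τ+ξ} λ(ρ−ξ, ρ)·v(ρ) dρ ) dξ = ∫_ℝ v(ρ) · ( ∫_ℝ (θ(τ−ζ) − θ(τ−ρ)) · λ(ζ, ρ) dζ ) dρ, where ∫_τ^{τ+ξ} denotes the oriented integral (equal to minus ∫_{τ+ξ}^τ when ξ < 0). -/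
/-!
The oriented integral `∫_τ^{τ+ξ}` is the integral over `ℝ` against the kernel
`θ(τ+ξ-ρ) - θ(τ-ρ)`. The kernel is bounded and the shear `(ξ, ρ) ↦ (ρ - ξ, ρ)` preserves
Lebesgue measure, so the double integral converges absolutely; Fubini swaps the order, and the
substitution `ζ = ρ - ξ` in the inner integral turns the kernel into `θ(τ-ζ) - θ(τ-ρ)`.
-/

open MeasureTheory Set

noncomputable def heaviside : ℝ → ℝ := (Ici 0).indicator 1

theorem heaviside_sub_mul (a x : ℝ) (f : ℝ → ℝ) :
    heaviside (a - x) * f x = (Iic a).indicator f x := by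
  by_cases hx : x ≤ a <;> simp [heaviside, hx]

theorem measurable_heaviside : Measurable heaviside :=
  measurable_one.indicator measurableSet_Ici

theorem abs_heaviside_sub_heaviside_le_one (a b : ℝ) : |heaviside a - heaviside b| ≤ 1 := by
  unfold heaviside
  by_cases ha : 0 ≤ a <;> by_cases hb : 0 ≤ b <;> simp [ha, hb]

theorem intervalIntegral_eq_integral_heaviside_sub {f : ℝ → ℝ} (hf : Integrable f) (a b : ℝ) :
    ∫ x in a..b, f x = ∫ x, (heaviside (b - x) - heaviside (a - x)) * f x := by
  simp only [sub_mul, heaviside_sub_mul]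
  rw [integral_sub (hf.indicator measurableSet_Iic) (hf.indicator measurableSet_Iic),
    integral_indicator measurableSet_Iic, integral_indicator measurableSet_Iic,
    intervalIntegral.integral_Iic_sub_Iic hf.integrableOn hf.integrableOn]

theorem measurePreserving_snd_sub_prod {G : Type*} [AddCommGroup G] [MeasurableSpace G]
    [MeasurableAdd₂ G] [MeasurableNeg G] (μ ν : Measure G) [SFinite μ] [SFinite ν]
    [μ.IsAddRightInvariant] [μ.IsNegInvariant] :
    MeasurePreserving (fun p : G × G => (p.2 - p.1, p.2)) (μ.prod ν) (μ.prod ν) := by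
  convert (measurePreserving_add_prod μ ν).comp
    ((Measure.measurePreserving_neg μ).prod (MeasurePreserving.id ν)) using 1
  ext p <;> simp [neg_add_eq_sub]

theorem MeasureTheory.Integrable.comp_snd_sub_prod {E : Type*} [NormedAddCommGroup E]
    {g : ℝ × ℝ → E} (hg : Integrable g) : Integrable fun p : ℝ × ℝ => g (p.2 - p.1, p.2) :=
  (measurePreserving_snd_sub_prod volume volume).integrable_comp_of_integrable hg

theorem integral_integral_heaviside_kernel_comm {g : ℝ × ℝ → ℝ} (hg : Integrable g) (τ : ℝ) :
    ∫ ξ, ∫ ρ, (heaviside (τ + ξ - ρ) - heaviside (τ - ρ)) * g (ρ - ξ, ρ)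
      = ∫ ρ, ∫ ζ, (heaviside (τ - ζ) - heaviside (τ - ρ)) * g (ζ, ρ) := by
  have hkernel : Integrable fun p : ℝ × ℝ =>
      (heaviside (τ + p.1 - p.2) - heaviside (τ - p.2)) * g (p.2 - p.1, p.2) := by
    refine hg.comp_snd_sub_prod.bdd_mul (c := 1) ?_ (.of_forall fun p => ?_)
    · exact ((measurable_heaviside.comp (by fun_prop)).sub
        (measurable_heaviside.comp (by fun_prop))).aestronglyMeasurable
    · exact abs_heaviside_sub_heaviside_le_one _ _
  rw [integral_integral_swap hkernel]
  refine integral_congr_ae (.of_forall fun ρ => ?_)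
  dsimp only
  rw [← integral_sub_left_eq_self _ volume ρ]
  simp only [sub_sub_cancel]
  congr 1 with ζ
  rw [show τ + (ρ - ζ) - ρ = τ - ζ by ring]

theorem stmt1_general (lam : ℝ × ℝ → ℝ) (v : ℝ → ℝ)
    (hlam : Continuous lam) (hlamc : HasCompactSupport lam)
    (hv : Continuous v)
    (θ : ℝ → ℝ) (hθ : ∀ x, θ x = if 0 ≤ x then 1 else 0) (τ : ℝ) :
    ∫ ξ : ℝ, (∫ ρ in τ..(τ + ξ), lam (ρ - ξ, ρ) * v ρ)
      = ∫ ρ : ℝ, v ρ * ∫ ζ : ℝ, (θ (τ - ζ) - θ (τ - ρ)) * lam (ζ, ρ) := by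
  have hθ_eq : θ = heaviside := funext fun x => by simp [hθ, heaviside, indicator_apply]
  have hg : Integrable fun p : ℝ × ℝ => lam p * v p.2 :=
    (hlam.mul (hv.comp continuous_snd)).integrable_of_hasCompactSupport hlamc.mul_right
  calc ∫ ξ, (∫ ρ in τ..(τ + ξ), lam (ρ - ξ, ρ) * v ρ)
      = ∫ ξ, ∫ ρ, (heaviside (τ + ξ - ρ) - heaviside (τ - ρ)) * (lam (ρ - ξ, ρ) * v ρ) := by
        refine integral_congr_ae ?_
        filter_upwards [hg.comp_snd_sub_prod.prod_right_ae] with ξ hξ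
        exact intervalIntegral_eq_integral_heaviside_sub hξ τ (τ + ξ)
    _ = ∫ ρ, ∫ ζ, (heaviside (τ - ζ) - heaviside (τ - ρ)) * (lam (ζ, ρ) * v ρ) :=
        integral_integral_heaviside_kernel_comm hg τ
    _ = ∫ ρ, v ρ * ∫ ζ, (θ (τ - ζ) - θ (τ - ρ)) * lam (ζ, ρ) := by
        simp only [hθ_eq, mul_comm (v _), ← integral_mul_const, mul_assoc]

/-- Fubini-type rewriting with Heaviside step functions that converts the boundary term
Π(q,τ) of the non-local Noether identity into ∫ v(ρ) P(τ,ρ) dρ with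
P(τ,ρ) = ∫ (θ(τ−ζ)−θ(τ−ρ)) λ(ζ,ρ) dζ. -/
theorem stmt1 (lam : ℝ × ℝ → ℝ) (v : ℝ → ℝ)
    (hlam : Continuous lam) (hlamc : HasCompactSupport lam)
    (hv : Continuous v) (hvc : HasCompactSupport v)
    (θ : ℝ → ℝ) (hθ : ∀ x, θ x = if 0 ≤ x then 1 else 0) (τ : ℝ) :
    ∫ ξ : ℝ, (∫ ρ in τ..(τ + ξ), lam (ρ - ξ, ρ) * v ρ)
      = ∫ ρ : ℝ, v ρ * ∫ ζ : ℝ, (θ (τ - ζ) - θ (τ - ρ)) * lam (ζ, ρ) :=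
  stmt1_general lam v hlam hlamc hv θ hθ τ
end

section
/- Let ω, g ∈ ℝ, let 0 ≤ a < 1 and C > 0, and let q : ℝ → ℝ be a smooth function with |q(t)| ≤ C e^{a|t|} for all t ∈ ℝ. If q satisfies the non-local oscillator equation q''(ζ) + ω² q(ζ) − (g/2) ∫_ℝ e^{−|τ|} q(ζ−τ) dτ = 0 for all ζ ∈ ℝ, then q satisfies the fourth-order ordinary differential equation q⁗(ζ) + (ω² − 1) q''(ζ) + (g − ω²) q(ζ) = 0 for all ζ ∈ ℝ. -/
open MeasureTheory Set Filter

lemma aux_exp_Iic {b : ℝ} (hb : 0 < b) (c : ℝ) :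
    IntegrableOn (fun x : ℝ => Real.exp (b * x)) (Iic c) := by
  have h1 : IntegrableOn (fun x : ℝ => Real.exp (-b * x)) (Ioi (-c)) :=
    exp_neg_integrableOn_Ioi _ hb
  have h2 := (MeasurePreserving.integrableOn_comp_preimage
    (Measure.measurePreserving_neg (volume : Measure ℝ))
    (Homeomorph.neg ℝ).measurableEmbedding).2 h1
  have hset : ((Neg.neg : ℝ → ℝ) ⁻¹' Ioi (-c) : Set ℝ) = Iio c := by
    ext x; simp [neg_lt]
  rw [hset] at h2
  have h3 : IntegrableOn (fun x : ℝ => Real.exp (b * x)) (Iio c) := by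
    apply h2.congr_fun _ measurableSet_Iio
    intro x _
    simp [Function.comp, mul_comm]
  exact h3.congr_set_ae Iio_ae_eq_Iic.symm

lemma aux_int {C a : ℝ} (ha0 : 0 ≤ a) (ha1 : a < 1) {r : ℝ → ℝ} (hr : Continuous r)
    (hb : ∀ t, |r t| ≤ C * Real.exp (a * |t|)) (c : ℝ) :
    IntegrableOn (fun τ => Real.exp τ * r τ) (Iic c) := by
  have hC0 : 0 ≤ C := by
    have := hb 0
    simp at this
    exact le_trans (abs_nonneg _) this
  have hint : IntegrableOn (fun τ : ℝ => C * Real.exp (2 * a * max c 0) * Real.exp ((1 - a) * τ))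
      (Iic c) := (aux_exp_Iic (by linarith) c).const_mul _
  apply hint.mono' ((Real.continuous_exp.mul hr).aestronglyMeasurable)
  rw [ae_restrict_iff' measurableSet_Iic]
  refine Eventually.of_forall fun τ hτ => ?_
  have hτc : τ ≤ c := hτ
  have habs : |τ| + τ ≤ 2 * max c 0 := by
    rcases le_total τ 0 with h | h
    · rw [abs_of_nonpos h]; nlinarith [le_max_right c 0]
    · rw [abs_of_nonneg h]; nlinarith [le_max_left c 0]
  calc ‖Real.exp τ * r τ‖ = Real.exp τ * |r τ| := by
        rw [Real.norm_eq_abs, abs_mul, abs_of_pos (Real.exp_pos τ)]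
    _ ≤ Real.exp τ * (C * Real.exp (a * |τ|)) :=
        mul_le_mul_of_nonneg_left (hb τ) (Real.exp_pos τ).le
    _ = C * Real.exp (τ + a * |τ|) := by rw [Real.exp_add]; ring
    _ ≤ C * Real.exp (2 * a * max c 0 + (1 - a) * τ) := by
        apply mul_le_mul_of_nonneg_left _ hC0
        exact Real.exp_le_exp.2 (by nlinarith)
    _ = C * Real.exp (2 * a * max c 0) * Real.exp ((1 - a) * τ) := by
        rw [Real.exp_add]; ring

lemma aux_ftc {f : ℝ → ℝ} (hf : Continuous f) (hint : ∀ c : ℝ, IntegrableOn f (Iic c)) (x : ℝ) :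
    HasDerivAt (fun u => ∫ τ in Iic u, f τ) (f x) x := by
  have h : ∀ u : ℝ, (∫ τ in Iic 0, f τ) + ∫ τ in (0:ℝ)..u, f τ = ∫ τ in Iic u, f τ := by
    intro u
    rw [← intervalIntegral.integral_Iic_sub_Iic (hint 0) (hint u)]; ring
  have hd : HasDerivAt (fun u : ℝ => (∫ τ in Iic 0, f τ) + ∫ τ in (0:ℝ)..u, f τ) (f x) x :=
    (intervalIntegral.integral_hasDerivAt_right (hf.intervalIntegrable 0 x)
      (hf.stronglyMeasurable.stronglyMeasurableAtFilter) hf.continuousAt).const_add _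
  exact hd.congr_of_eventuallyEq (Eventually.of_forall fun u => (h u).symm)

/-- Every solution of the non-local harmonic oscillator equation
q̈ + ω²q − (g/2)(K∗q) = 0 with kernel K(ζ) = e^{−|ζ|} (with subexponential growth)
satisfies the local fourth-order equation q⁗ + (ω²−1)q̈ + (g−ω²)q = 0. -/
theorem stmt4 (ω g a C : ℝ) (ha0 : 0 ≤ a) (ha1 : a < 1) (hC : 0 < C)
    (q : ℝ → ℝ) (hq : ContDiff ℝ (⊤ : ℕ∞) q)
    (hbound : ∀ t : ℝ, |q t| ≤ C * Real.exp (a * |t|))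
    (heq : ∀ ζ : ℝ, iteratedDeriv 2 q ζ + ω ^ 2 * q ζ
      - (g / 2) * ∫ τ : ℝ, Real.exp (-|τ|) * q (ζ - τ) = 0) :
    ∀ ζ : ℝ, iteratedDeriv 4 q ζ + (ω ^ 2 - 1) * iteratedDeriv 2 q ζ
      + (g - ω ^ 2) * q ζ = 0 := by
  have hqc : Continuous q := hq.continuous
  have hbn : ∀ t : ℝ, |q (-t)| ≤ C * Real.exp (a * |t|) := fun t => by
    simpa [abs_neg] using hbound (-t)
  have hqcn : Continuous (fun t : ℝ => q (-t)) := hqc.comp continuous_neg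
  have hintp : ∀ c : ℝ, IntegrableOn (fun τ => Real.exp τ * q τ) (Iic c) :=
    aux_int ha0 ha1 hqc hbound
  have hintn : ∀ c : ℝ, IntegrableOn (fun τ => Real.exp τ * q (-τ)) (Iic c) :=
    aux_int ha0 ha1 hqcn hbn
  -- A and its derivative
  have hA : ∀ x : ℝ, HasDerivAt (fun u => ∫ τ in Iic u, Real.exp τ * q τ)
      (Real.exp x * q x) x := aux_ftc (Real.continuous_exp.mul hqc) hintp
  have hBn : ∀ x : ℝ, HasDerivAt (fun u => ∫ τ in Iic u, Real.exp τ * q (-τ))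
      (Real.exp x * q (-x)) x := aux_ftc (Real.continuous_exp.mul hqcn) hintn
  have hBc : ∀ x : ℝ, HasDerivAt (fun z : ℝ => ∫ τ in Iic (-z), Real.exp τ * q (-τ))
      (-(Real.exp (-x) * q x)) x := by
    intro x
    have h := (hBn (-x)).comp x (hasDerivAt_neg x)
    simpa [Function.comp_def] using h
  -- integrability of e^{-τ} q τ on Ioi c
  have hintm : ∀ c : ℝ, IntegrableOn (fun τ => Real.exp (-τ) * q τ) (Ioi c) := by
    intro c
    apply (MeasurePreserving.integrableOn_comp_preimage
      (Measure.measurePreserving_neg (volume : Measure ℝ))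
      (Homeomorph.neg ℝ).measurableEmbedding).1
    have hset : ((Neg.neg : ℝ → ℝ) ⁻¹' Ioi c : Set ℝ) = Iio (-c) := by
      ext x; simp [lt_neg]
    rw [hset]
    have h3 : IntegrableOn (fun τ => Real.exp τ * q (-τ)) (Iio (-c)) :=
      (hintn (-c)).mono_set Iio_subset_Iic_self
    apply h3.congr_fun _ measurableSet_Iio
    intro x _
    simp [Function.comp]
  -- representation of B as reflected Iic integral
  have hBrep : ∀ ζ : ℝ, (∫ τ in Ioi ζ, Real.exp (-τ) * q τ)
      = ∫ τ in Iic (-ζ), Real.exp τ * q (-τ) := by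
    intro ζ
    have h := integral_comp_neg_Iic (-ζ) (fun τ => Real.exp (-τ) * q τ)
    simp only [neg_neg] at h
    exact h.symm
  -- splitting of the convolution
  have hsub : ∀ ζ : ℝ, (∫ τ : ℝ, Real.exp (-|τ|) * q (ζ - τ))
      = Real.exp (-ζ) * (∫ τ in Iic ζ, Real.exp τ * q τ)
        + Real.exp ζ * (∫ τ in Iic (-ζ), Real.exp τ * q (-τ)) := by
    intro ζ
    have h1 : (∫ τ : ℝ, Real.exp (-|τ|) * q (ζ - τ))
        = ∫ τ : ℝ, Real.exp (-|ζ - τ|) * q τ := by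
      have h := MeasureTheory.integral_sub_left_eq_self
        (fun τ => Real.exp (-|ζ - τ|) * q τ) volume ζ
      simp only [sub_sub_cancel] at h
      exact h
    have key1 : ∀ τ ∈ Iic ζ, Real.exp (-ζ) * (Real.exp τ * q τ) = Real.exp (-|ζ - τ|) * q τ := by
      intro τ hτ
      have hτζ : τ ≤ ζ := hτ
      rw [abs_of_nonneg (by linarith : (0:ℝ) ≤ ζ - τ),
        show Real.exp (-(ζ - τ)) = Real.exp (-ζ) * Real.exp τ from by
          rw [← Real.exp_add]; ring_nf]
      ring
    have key2 : ∀ τ ∈ Ioi ζ, Real.exp ζ * (Real.exp (-τ) * q τ) = Real.exp (-|ζ - τ|) * q τ := by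
      intro τ hτ
      have hτζ : ζ < τ := hτ
      rw [abs_of_nonpos (by linarith : ζ - τ ≤ (0:ℝ)),
        show Real.exp (-(-(ζ - τ))) = Real.exp ζ * Real.exp (-τ) from by
          rw [← Real.exp_add]; ring_nf]
      ring
    have hIic : IntegrableOn (fun τ => Real.exp (-|ζ - τ|) * q τ) (Iic ζ) :=
      IntegrableOn.congr_fun ((hintp ζ).const_mul (Real.exp (-ζ))) key1 measurableSet_Iic
    have hIoi : IntegrableOn (fun τ => Real.exp (-|ζ - τ|) * q τ) (Ioi ζ) :=
      IntegrableOn.congr_fun ((hintm ζ).const_mul (Real.exp ζ)) key2 measurableSet_Ioi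
    rw [h1, ← intervalIntegral.integral_Iic_add_Ioi hIic hIoi]
    congr 1
    · rw [← MeasureTheory.integral_const_mul]
      exact (setIntegral_congr_fun measurableSet_Iic key1).symm
    · rw [← hBrep ζ, ← MeasureTheory.integral_const_mul]
      exact (setIntegral_congr_fun measurableSet_Ioi key2).symm
  -- first derivative of the convolution
  have hexp1 : ∀ ζ : ℝ, Real.exp (-ζ) * Real.exp ζ = 1 := fun ζ => by
    rw [← Real.exp_add]; simp
  have hFd : ∀ ζ : ℝ, HasDerivAt (fun z => ∫ τ : ℝ, Real.exp (-|τ|) * q (z - τ))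
      (-(Real.exp (-ζ)) * (∫ τ in Iic ζ, Real.exp τ * q τ)
        + Real.exp ζ * (∫ τ in Iic (-ζ), Real.exp τ * q (-τ))) ζ := by
    intro ζ
    have hd1 : HasDerivAt (fun z : ℝ => Real.exp (-z)) (Real.exp (-ζ) * (-1)) ζ :=
      (hasDerivAt_neg ζ).exp
    have hd2 : HasDerivAt (fun z : ℝ => Real.exp z) (Real.exp ζ) ζ := Real.hasDerivAt_exp ζ
    have hd := (hd1.mul (hA ζ)).add (hd2.mul (hBc ζ))
    have hd' := hd.congr_of_eventuallyEq (Eventually.of_forall fun z => (hsub z))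
    refine hd'.congr_deriv ?_
    have e1 : Real.exp (-ζ) * (Real.exp ζ * q ζ) = q ζ := by
      rw [← mul_assoc, hexp1]; ring
    have e2 : Real.exp ζ * (Real.exp (-ζ) * q ζ) = q ζ := by
      rw [← mul_assoc, mul_comm (Real.exp ζ), hexp1]; ring
    ring_nf
  -- second derivative of the convolution
  have hGd : ∀ ζ : ℝ, HasDerivAt (fun z : ℝ =>
      -(Real.exp (-z)) * (∫ τ in Iic z, Real.exp τ * q τ)
        + Real.exp z * (∫ τ in Iic (-z), Real.exp τ * q (-τ)))
      ((∫ τ : ℝ, Real.exp (-|τ|) * q (ζ - τ)) - 2 * q ζ) ζ := by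
    intro ζ
    have hd1 : HasDerivAt (fun z : ℝ => -(Real.exp (-z))) (-(Real.exp (-ζ) * (-1))) ζ :=
      ((hasDerivAt_neg ζ).exp).neg
    have hd2 : HasDerivAt (fun z : ℝ => Real.exp z) (Real.exp ζ) ζ := Real.hasDerivAt_exp ζ
    have hd := (hd1.mul (hA ζ)).add (hd2.mul (hBc ζ))
    refine hd.congr_deriv ?_
    have e1 : Real.exp (-ζ) * (Real.exp ζ * q ζ) = q ζ := by
      rw [← mul_assoc, hexp1]; ring
    have e2 : Real.exp ζ * (Real.exp (-ζ) * q ζ) = q ζ := by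
      rw [← mul_assoc, mul_comm (Real.exp ζ), hexp1]; ring
    rw [hsub ζ]
    ring_nf
    ring_nf at e1 e2 ⊢
    nlinarith [e1, e2]
  -- derivatives of q
  have hQD : ∀ (n : ℕ) (ζ : ℝ), HasDerivAt (iteratedDeriv n q) (iteratedDeriv (n + 1) q ζ) ζ := by
    intro n ζ
    rw [iteratedDeriv_succ]
    have hdiff : Differentiable ℝ (iteratedDeriv n q) :=
      hq.differentiable_iteratedDeriv n (by exact_mod_cast ENat.coe_lt_top n)
    exact (hdiff ζ).hasDerivAt
  have heqF : ∀ ζ : ℝ, iteratedDeriv 2 q ζ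
      = (g / 2) * (∫ τ : ℝ, Real.exp (-|τ|) * q (ζ - τ)) - ω ^ 2 * q ζ := by
    intro ζ; linarith [heq ζ]
  -- third derivative identity
  have h3 : ∀ ζ : ℝ, iteratedDeriv 3 q ζ
      = (g / 2) * (-(Real.exp (-ζ)) * (∫ τ in Iic ζ, Real.exp τ * q τ)
          + Real.exp ζ * (∫ τ in Iic (-ζ), Real.exp τ * q (-τ)))
        - ω ^ 2 * iteratedDeriv 1 q ζ := by
    intro ζ
    have hq1 : HasDerivAt q (iteratedDeriv 1 q ζ) ζ := by
      have := hQD 0 ζ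
      rwa [iteratedDeriv_zero] at this
    have hR := ((hFd ζ).const_mul (g / 2)).sub (hq1.const_mul (ω ^ 2))
    have hL : HasDerivAt (iteratedDeriv 2 q)
        ((g / 2) * (-(Real.exp (-ζ)) * (∫ τ in Iic ζ, Real.exp τ * q τ)
          + Real.exp ζ * (∫ τ in Iic (-ζ), Real.exp τ * q (-τ)))
        - ω ^ 2 * iteratedDeriv 1 q ζ) ζ :=
      hR.congr_of_eventuallyEq (Eventually.of_forall fun z => (heqF z))
    exact (hQD 2 ζ).unique hL
  intro ζ
  have hq2 : HasDerivAt (iteratedDeriv 1 q) (iteratedDeriv 2 q ζ) ζ := hQD 1 ζ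
  have hR := ((hGd ζ).const_mul (g / 2)).sub (hq2.const_mul (ω ^ 2))
  have hL : HasDerivAt (iteratedDeriv 3 q)
      ((g / 2) * ((∫ τ : ℝ, Real.exp (-|τ|) * q (ζ - τ)) - 2 * q ζ)
        - ω ^ 2 * iteratedDeriv 2 q ζ) ζ :=
    hR.congr_of_eventuallyEq (Eventually.of_forall fun z => (h3 z))
  have h4 : iteratedDeriv 4 q ζ
      = (g / 2) * ((∫ τ : ℝ, Real.exp (-|τ|) * q (ζ - τ)) - 2 * q ζ)
        - ω ^ 2 * iteratedDeriv 2 q ζ := (hQD 3 ζ).unique hL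
  have := heq ζ
  nlinarith [h4, this]
end

section
/- Let ω, g ∈ ℝ and let r ∈ ℂ with |Re r| < 1. The function q(ζ) = e^{rζ} (ζ ∈ ℝ) satisfies the non-local oscillator equation q''(ζ) + ω² q(ζ) − (g/2) ∫_ℝ e^{−|τ|} q(ζ−τ) dτ = 0 for all ζ ∈ ℝ if and only if r⁴ + (ω² − 1) r² + (g − ω²) = 0. -/
/-!
Since `|Re r| < 1`, the kernel `e^{-|τ|}` integrates against `e^{-rτ}` to
`1/(1+r) + 1/(1-r) = 2/(1-r²)`, so `e^{rζ}` is an eigenfunction of the convolution. The left side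
of the equation is therefore `(r² + ω² - g/(1-r²)) e^{rζ}`, and multiplying by `1 - r² ≠ 0` turns
the vanishing of the bracket into the characteristic quartic.
-/
open MeasureTheory Set Complex

theorem hasDerivAt_cexp_mul_ofReal (r : ℂ) (s : ℝ) :
    HasDerivAt (fun t : ℝ => cexp (r * t)) (r * cexp (r * s)) s := by
  simpa [mul_comm] using ((hasDerivAt_id (s : ℂ)).const_mul r).cexp.comp_ofReal

theorem deriv_deriv_cexp_mul_ofReal (r : ℂ) (ζ : ℝ) :
    deriv (deriv fun t : ℝ => cexp (r * t)) ζ = r ^ 2 * cexp (r * ζ) := by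
  have hderiv : deriv (fun t : ℝ => cexp (r * t)) = fun t : ℝ => r * cexp (r * t) :=
    funext fun t => (hasDerivAt_cexp_mul_ofReal r t).deriv
  rw [hderiv, ((hasDerivAt_cexp_mul_ofReal r ζ).const_mul r).deriv]
  ring

theorem one_sub_sq_ne_zero_of_abs_re_lt_one {a : ℂ} (ha : |a.re| < 1) : 1 - a ^ 2 ≠ 0 := by
  intro h
  have : a = 1 ∨ a = -1 := sq_eq_one_iff.mp (sub_eq_zero.mp h).symm
  rcases this with rfl | rfl <;> simp at ha

theorem integral_exp_neg_abs_mul_cexp {a : ℂ} (ha : |a.re| < 1) :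
    ∫ τ : ℝ, (Real.exp (-|τ|) : ℂ) * cexp (a * τ) = 2 / (1 - a ^ 2) := by
  obtain ⟨ha₁, ha₂⟩ := abs_lt.mp ha
  have hpos : 0 < (1 + a).re := by rw [add_re, one_re]; linarith
  have hneg : (a - 1).re < 0 := by rw [sub_re, one_re]; linarith
  have hleft : EqOn (fun τ : ℝ => (Real.exp (-|τ|) : ℂ) * cexp (a * τ))
      (fun τ : ℝ => cexp ((1 + a) * τ)) (Iic 0) := fun τ hτ => by
    simp only [abs_of_nonpos (mem_Iic.mp hτ), neg_neg, ofReal_exp, ← Complex.exp_add]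
    ring_nf
  have hright : EqOn (fun τ : ℝ => (Real.exp (-|τ|) : ℂ) * cexp (a * τ))
      (fun τ : ℝ => cexp ((a - 1) * τ)) (Ioi 0) := fun τ hτ => by
    simp only [abs_of_pos (mem_Ioi.mp hτ), ofReal_exp, ofReal_neg, ← Complex.exp_add]
    ring_nf
  rw [← intervalIntegral.integral_Iic_add_Ioi
      ((integrableOn_exp_mul_complex_Iic hpos 0).congr_fun hleft.symm measurableSet_Iic)
      ((integrableOn_exp_mul_complex_Ioi hneg 0).congr_fun hright.symm measurableSet_Ioi),
    setIntegral_congr_fun measurableSet_Iic hleft, setIntegral_congr_fun measurableSet_Ioi hright,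
    integral_exp_mul_complex_Iic hpos, integral_exp_mul_complex_Ioi hneg]
  have h₁ : 1 + a ≠ 0 := fun h => by simp [h] at hpos
  have h₂ : a - 1 ≠ 0 := fun h => by simp [h] at hneg
  have h₃ := one_sub_sq_ne_zero_of_abs_re_lt_one ha
  simp only [ofReal_zero, mul_zero, Complex.exp_zero]
  field_simp
  ring

theorem integral_exp_neg_abs_mul_cexp_sub {r : ℂ} (hr : |r.re| < 1) (ζ : ℝ) :
    ∫ τ : ℝ, (Real.exp (-|τ|) : ℂ) * cexp (r * (ζ - τ)) = 2 / (1 - r ^ 2) * cexp (r * ζ) := by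
  have hfactor : ∀ τ : ℝ, (Real.exp (-|τ|) : ℂ) * cexp (r * (ζ - τ))
      = cexp (r * ζ) * ((Real.exp (-|τ|) : ℂ) * cexp (-r * τ)) := fun τ => by
    rw [mul_left_comm, ← Complex.exp_add]
    ring_nf
  simp_rw [hfactor]
  rw [integral_const_mul, integral_exp_neg_abs_mul_cexp (by simpa using hr), neg_sq, mul_comm]

/-- The exponential trajectory q(ζ) = e^{rζ} with |Re r| < 1 solves the non-local
oscillator equation q̈ + ω²q − (g/2)(K∗q) = 0, K(ζ) = e^{−|ζ|}, iff r is a root of the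
characteristic quartic r⁴ + (ω²−1)r² + (g−ω²). -/
theorem stmt5 (ω g : ℝ) (r : ℂ) (hr : |r.re| < 1) :
    (∀ ζ : ℝ,
        deriv (deriv (fun s : ℝ => Complex.exp (r * s))) ζ
          + (ω : ℂ) ^ 2 * Complex.exp (r * ζ)
          - ((g : ℂ) / 2) *
              ∫ τ : ℝ, (Real.exp (-|τ|) : ℂ) * Complex.exp (r * ((ζ : ℂ) - τ)) = 0)
      ↔ r ^ 4 + ((ω : ℂ) ^ 2 - 1) * r ^ 2 + ((g : ℂ) - (ω : ℂ) ^ 2) = 0 := by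
  have hr₂ := one_sub_sq_ne_zero_of_abs_re_lt_one hr
  have hfactor : ∀ ζ : ℝ, deriv (deriv (fun s : ℝ => cexp (r * s))) ζ + (ω : ℂ) ^ 2 * cexp (r * ζ)
      - ((g : ℂ) / 2) * ∫ τ : ℝ, (Real.exp (-|τ|) : ℂ) * cexp (r * ((ζ : ℂ) - τ))
      = -(r ^ 4 + ((ω : ℂ) ^ 2 - 1) * r ^ 2 + ((g : ℂ) - (ω : ℂ) ^ 2)) / (1 - r ^ 2)
        * cexp (r * ζ) := fun ζ => by
    rw [deriv_deriv_cexp_mul_ofReal, integral_exp_neg_abs_mul_cexp_sub hr]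
    field_simp
    ring
  simp only [hfactor, mul_eq_zero, Complex.exp_ne_zero, or_false, div_eq_zero_iff, hr₂,
    neg_eq_zero, forall_const]
end

section
/- Let g, ω ∈ ℝ with 1 < ω², 2√g − 1 < ω², and ω² < g (in particular g > 1). Then every complex root z of the polynomial z⁴ + (ω² − 1) z² + (g − ω²) is purely imaginary (Re z = 0) and nonzero, and the polynomial has exactly four distinct complex roots. -/
/-!
With `a = ω² - 1` and `c = g - ω²`, the hypotheses say `a > 0`, `c > 0` and
`a² - 4c = (ω² + 1)² - 4g > 0`. So `t² - a t + c` has two distinct positive roots `r² < s²`,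
and `z⁴ + a z² + c = (z² + r²)(z² + s²)` has the four distinct roots `±r i`, `±s i`.
-/

open Complex

theorem exists_pos_lt_add_eq_mul_eq {a c : ℝ} (ha : 0 < a) (hc : 0 < c) (hd : 4 * c < a ^ 2) :
    ∃ u v : ℝ, 0 < u ∧ u < v ∧ u + v = a ∧ u * v = c := by
  set d := √(a ^ 2 - 4 * c)
  have hd_sq : d ^ 2 = a ^ 2 - 4 * c := Real.sq_sqrt (by linarith)
  have hd_pos : 0 < d := Real.sqrt_pos.mpr (by linarith)
  have hd_lt : d < a := by nlinarith
  exact ⟨(a - d) / 2, (a + d) / 2, by linarith, by linarith, by ring,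
    by linear_combination hd_sq / -4⟩

theorem exists_pos_lt_sq_add_sq_eq_sq_mul_sq_eq {a c : ℝ} (ha : 0 < a) (hc : 0 < c)
    (hd : 4 * c < a ^ 2) :
    ∃ r s : ℝ, 0 < r ∧ r < s ∧ r ^ 2 + s ^ 2 = a ∧ r ^ 2 * s ^ 2 = c := by
  obtain ⟨u, v, hu, huv, hsum, hprod⟩ := exists_pos_lt_add_eq_mul_eq ha hc hd
  refine ⟨√u, √v, Real.sqrt_pos.mpr hu, Real.sqrt_lt_sqrt hu.le huv, ?_, ?_⟩
  · rw [Real.sq_sqrt hu.le, Real.sq_sqrt (hu.trans huv).le, hsum]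
  · rw [Real.sq_sqrt hu.le, Real.sq_sqrt (hu.trans huv).le, hprod]

theorem Complex.sq_add_ofReal_sq_eq_zero_iff (r : ℝ) (z : ℂ) :
    z ^ 2 + (r : ℂ) ^ 2 = 0 ↔ z = r * I ∨ z = -(r * I) := by
  rw [← sq_eq_sq_iff_eq_or_eq_neg, mul_pow, I_sq]
  constructor <;> intro h <;> linear_combination h

theorem Complex.setOf_biquadratic_eq_image (r s : ℝ) :
    {z : ℂ | z ^ 4 + ((r : ℂ) ^ 2 + (s : ℂ) ^ 2) * z ^ 2 + (r : ℂ) ^ 2 * (s : ℂ) ^ 2 = 0} =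
      (fun x : ℝ => (x : ℂ) * I) '' {r, -r, s, -s} := by
  ext z
  have hfactor : z ^ 4 + ((r : ℂ) ^ 2 + (s : ℂ) ^ 2) * z ^ 2 + (r : ℂ) ^ 2 * (s : ℂ) ^ 2 =
      (z ^ 2 + (r : ℂ) ^ 2) * (z ^ 2 + (s : ℂ) ^ 2) := by ring
  simp only [Set.mem_ofPred_eq, hfactor, mul_eq_zero, sq_add_ofReal_sq_eq_zero_iff,
    Set.image_insert_eq, Set.image_singleton, Set.mem_insert_iff, Set.mem_singleton_iff,
    ofReal_neg, neg_mul, or_assoc]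

theorem ncard_pm_pm_eq_four {r s : ℝ} (hr : 0 < r) (hrs : r < s) :
    ({r, -r, s, -s} : Set ℝ).ncard = 4 := by
  rw [Set.ncard_insert_of_notMem, Set.ncard_insert_of_notMem, Set.ncard_pair] <;> grind

/-- Region 4 of the parameter space of the non-local harmonic oscillator: for
max{1, 2√g−1} < ω² < g, all roots of z⁴ + (ω²−1)z² + (g−ω²) are purely imaginary,
nonzero, and there are exactly four distinct roots. -/
theorem stmt6 (g ω : ℝ) (h1 : 1 < ω ^ 2) (h2 : 2 * Real.sqrt g - 1 < ω ^ 2)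
    (h3 : ω ^ 2 < g) :
    (∀ z : ℂ, z ^ 4 + ((ω : ℂ) ^ 2 - 1) * z ^ 2 + ((g : ℂ) - (ω : ℂ) ^ 2) = 0 →
      z.re = 0 ∧ z ≠ 0) ∧
    {z : ℂ | z ^ 4 + ((ω : ℂ) ^ 2 - 1) * z ^ 2 + ((g : ℂ) - (ω : ℂ) ^ 2) = 0}.ncard = 4 := by
  have hdisc : 4 * (g - ω ^ 2) < (ω ^ 2 - 1) ^ 2 := by
    have hsqrt_sq : √g ^ 2 = g := Real.sq_sqrt (by linarith)
    nlinarith [Real.sqrt_nonneg g]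
  obtain ⟨r, s, hr, hrs, hsum, hprod⟩ :=
    exists_pos_lt_sq_add_sq_eq_sq_mul_sq_eq (a := ω ^ 2 - 1) (by linarith) (by linarith) hdisc
  have hroots : {z : ℂ | z ^ 4 + ((ω : ℂ) ^ 2 - 1) * z ^ 2 + ((g : ℂ) - (ω : ℂ) ^ 2) = 0} =
      (fun x : ℝ => (x : ℂ) * I) '' {r, -r, s, -s} := by
    have hsumC : (ω : ℂ) ^ 2 - 1 = (r : ℂ) ^ 2 + (s : ℂ) ^ 2 := by exact_mod_cast hsum.symm
    have hprodC : (g : ℂ) - (ω : ℂ) ^ 2 = (r : ℂ) ^ 2 * (s : ℂ) ^ 2 := by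
      exact_mod_cast hprod.symm
    rw [hsumC, hprodC, setOf_biquadratic_eq_image]
  refine ⟨fun z hz => ?_, ?_⟩
  · obtain ⟨x, hx, rfl⟩ := (Set.ext_iff.mp hroots z).mp hz
    have hx0 : x ≠ 0 := by
      rcases hx with rfl | rfl | rfl | rfl <;> simp only [ne_eq, neg_eq_zero] <;> linarith
    simpa using hx0
  · rw [hroots, Set.ncard_image_of_injective _ fun x y h => by simpa using h,
      ncard_pm_pm_eq_four hr hrs]
end

section
/- Let g, ω ∈ ℝ with 1 < ω², 2√g − 1 < ω², and ω² < g. Then every four-times continuously differentiable function q : ℝ → ℝ satisfying q⁗(t) + (ω² − 1) q''(t) + (g − ω²) q(t) = 0 for all t ∈ ℝ is bounded on ℝ. -/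
/-!
The characteristic polynomial factors as `(λ² + r₁)(λ² + r₂)` with `0 < r₁ < r₂`, so
`q'' + r₂ q` solves the harmonic oscillator `u'' = -r₁ u` and `q'' + r₁ q` solves `u'' = -r₂ u`.
Both are bounded by conservation of energy, and `q` is their difference divided by `r₂ - r₁`.
-/

theorem iteratedDeriv_iteratedDeriv {𝕜 F : Type*} [NontriviallyNormedField 𝕜]
    [NormedAddCommGroup F] [NormedSpace 𝕜 F] (m n : ℕ) (f : 𝕜 → F) :
    iteratedDeriv m (iteratedDeriv n f) = iteratedDeriv (m + n) f := by
  simp only [iteratedDeriv_eq_iterate, Function.iterate_add_apply]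

theorem exists_abs_le_of_iteratedDeriv_two_eq_neg_mul {r : ℝ} (hr : 0 < r) {u : ℝ → ℝ}
    (hu : ContDiff ℝ 2 u) (h : ∀ t, iteratedDeriv 2 u t = -(r * u t)) :
    ∃ M, ∀ t, |u t| ≤ M := by
  have hu₀ : Differentiable ℝ u := hu.differentiable (by norm_num)
  have hu₁ : Differentiable ℝ (deriv u) := by
    simpa only [iteratedDeriv_one] using hu.differentiable_iteratedDeriv 1 (by norm_num)
  have hu₂ : ∀ t, deriv (deriv u) t = -(r * u t) := by
    simpa only [iteratedDeriv_succ, iteratedDeriv_zero] using h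
  set E : ℝ → ℝ := fun t => deriv u t ^ 2 + r * u t ^ 2
  have hE : ∀ t, HasDerivAt E 0 t := fun t => by
    have h' := ((hu₂ t ▸ (hu₁ t).hasDerivAt).fun_pow 2).fun_add
      (((hu₀ t).hasDerivAt.fun_pow 2).const_mul r)
    exact h'.congr_deriv (by ring)
  have hE_const : ∀ t, E t = E 0 := fun t =>
    is_const_of_deriv_eq_zero (fun x => (hE x).differentiableAt) (fun x => (hE x).deriv) t 0
  refine ⟨√(E 0 / r), fun t => ?_⟩
  have hut : u t ^ 2 ≤ E 0 / r := by
    rw [le_div_iff₀ hr, ← hE_const t]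
    nlinarith [sq_nonneg (deriv u t)]
  simpa only [Real.sqrt_sq_eq_abs] using Real.sqrt_le_sqrt hut

theorem exists_pos_lt_add_eq_mul_eq_s7 {a b : ℝ} (ha : 0 < a) (hb : 0 < b) (hab : 4 * b < a ^ 2) :
    ∃ r₁ r₂ : ℝ, 0 < r₁ ∧ r₁ < r₂ ∧ r₁ + r₂ = a ∧ r₁ * r₂ = b := by
  have hd : 0 < a ^ 2 - 4 * b := by linarith
  have hs : √(a ^ 2 - 4 * b) ^ 2 = a ^ 2 - 4 * b := Real.sq_sqrt hd.le
  have hs_pos : 0 < √(a ^ 2 - 4 * b) := Real.sqrt_pos.mpr hd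
  refine ⟨(a - √(a ^ 2 - 4 * b)) / 2, (a + √(a ^ 2 - 4 * b)) / 2, ?_, by linarith, by ring,
    by linear_combination -hs / 4⟩
  nlinarith

theorem exists_abs_iteratedDeriv_two_add_mul_le {r₁ r₂ : ℝ} (hr₁ : 0 < r₁) {q : ℝ → ℝ}
    (hq : ContDiff ℝ 4 q)
    (h : ∀ t, iteratedDeriv 4 q t + (r₁ + r₂) * iteratedDeriv 2 q t + r₁ * r₂ * q t = 0) :
    ∃ M, ∀ t, |iteratedDeriv 2 q t + r₂ * q t| ≤ M := by
  have hq₂ : ContDiff ℝ 2 (iteratedDeriv 2 q) := by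
    rw [iteratedDeriv_eq_iterate]
    exact_mod_cast hq.iterate_deriv' 2 2
  have hq₀ : ContDiff ℝ 2 (fun t => r₂ * q t) := contDiff_const.mul (hq.of_le (by norm_num))
  refine exists_abs_le_of_iteratedDeriv_two_eq_neg_mul hr₁ (hq₂.add hq₀) fun t => ?_
  rw [iteratedDeriv_fun_add hq₂.contDiffAt hq₀.contDiffAt, iteratedDeriv_const_mul_field,
    iteratedDeriv_iteratedDeriv]
  linear_combination h t

theorem exists_abs_le_of_iteratedDeriv_four_add_eq_zero {a b : ℝ} (ha : 0 < a) (hb : 0 < b)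
    (hab : 4 * b < a ^ 2) {q : ℝ → ℝ} (hq : ContDiff ℝ 4 q)
    (h : ∀ t, iteratedDeriv 4 q t + a * iteratedDeriv 2 q t + b * q t = 0) :
    ∃ M, ∀ t, |q t| ≤ M := by
  obtain ⟨r₁, r₂, hr₁, hr₁₂, rfl, rfl⟩ := exists_pos_lt_add_eq_mul_eq_s7 ha hb hab
  obtain ⟨M₁, hM₁⟩ := exists_abs_iteratedDeriv_two_add_mul_le hr₁ hq h
  obtain ⟨M₂, hM₂⟩ := exists_abs_iteratedDeriv_two_add_mul_le (hr₁.trans hr₁₂) hq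
    (by simpa only [add_comm r₁, mul_comm r₁] using h)
  have hr : 0 < r₂ - r₁ := sub_pos.mpr hr₁₂
  refine ⟨(M₁ + M₂) / (r₂ - r₁), fun t => ?_⟩
  rw [le_div_iff₀ hr, ← abs_of_pos hr, ← abs_mul]
  calc |q t * (r₂ - r₁)|
      = |(iteratedDeriv 2 q t + r₂ * q t) - (iteratedDeriv 2 q t + r₁ * q t)| := by ring_nf
    _ ≤ M₁ + M₂ := (abs_sub _ _).trans (by linarith [hM₁ t, hM₂ t])

/-- In the stability region max{1, 2√g−1} < ω² < g, every C⁴ solution of the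
fourth-order equation q⁗ + (ω²−1)q̈ + (g−ω²)q = 0 is bounded on ℝ. -/
theorem stmt7 (g ω : ℝ) (h1 : 1 < ω ^ 2) (h2 : 2 * Real.sqrt g - 1 < ω ^ 2)
    (h3 : ω ^ 2 < g)
    (q : ℝ → ℝ) (hq : ContDiff ℝ 4 q)
    (heq : ∀ t : ℝ, iteratedDeriv 4 q t + (ω ^ 2 - 1) * iteratedDeriv 2 q t
      + (g - ω ^ 2) * q t = 0) :
    ∃ M : ℝ, ∀ t : ℝ, |q t| ≤ M := by
  have hg : √g ^ 2 = g := Real.sq_sqrt (by linarith)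
  refine exists_abs_le_of_iteratedDeriv_four_add_eq_zero (by linarith) (by linarith) ?_ hq heq
  nlinarith [Real.sqrt_nonneg g]
end

section
/- Let ω ∈ ℝ and g < 0. Then the polynomial z⁴ + (ω² − 1) z² + (g − ω²) has exactly two real roots, namely ±ρ for some real ρ > 1, and exactly two purely imaginary roots, namely ±is for some real s > 0, and these four numbers are all of its complex roots. -/
open Complex

/-- The quadratic `w² + p w + q` is negative at `w = 0` and at `w = 1`, so it has one root
`a > 1` and one negative root `-b`. -/
lemma exists_quadratic_roots_of_neg_at_zero_one {p q : ℝ} (h0 : q < 0) (h1 : 1 + p + q < 0) :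
    ∃ a b : ℝ, 1 < a ∧ 0 < b ∧ b - a = p ∧ a * b = -q := by
  set r := √(p ^ 2 - 4 * q)
  have hr : 0 ≤ r := Real.sqrt_nonneg _
  have hr2 : r ^ 2 = p ^ 2 - 4 * q := Real.sq_sqrt (by nlinarith)
  refine ⟨(r - p) / 2, (r + p) / 2, ?_, ?_, by ring, by linear_combination hr2 / 4⟩
  · nlinarith
  · nlinarith

lemma quartic_eq_zero_iff (ρ s z : ℂ) :
    z ^ 4 + (s ^ 2 - ρ ^ 2) * z ^ 2 - ρ ^ 2 * s ^ 2 = 0 ↔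
      z = ρ ∨ z = -ρ ∨ z = I * s ∨ z = -(I * s) := by
  have hfac : z ^ 4 + (s ^ 2 - ρ ^ 2) * z ^ 2 - ρ ^ 2 * s ^ 2
      = (z - ρ) * (z + ρ) * (z - I * s) * (z + I * s) := by
    linear_combination (z ^ 2 - ρ ^ 2) * s ^ 2 * I_sq
  simp only [hfac, mul_eq_zero, sub_eq_zero, add_eq_zero_iff_eq_neg, or_assoc]

/-- Region 1 of the parameter space (g < 0) of the non-local harmonic oscillator:
the quartic z⁴ + (ω²−1)z² + (g−ω²) has exactly two real roots ±ρ with ρ > 1, two purely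
imaginary roots ±is with s > 0, and no other complex roots. -/
theorem stmt8 (ω g : ℝ) (hg : g < 0) :
    ∃ ρ s : ℝ, 1 < ρ ∧ 0 < s ∧
      ∀ z : ℂ, z ^ 4 + ((ω : ℂ) ^ 2 - 1) * z ^ 2 + ((g : ℂ) - (ω : ℂ) ^ 2) = 0 ↔
        (z = (ρ : ℂ) ∨ z = -(ρ : ℂ) ∨ z = Complex.I * s ∨ z = -(Complex.I * s)) := by
  obtain ⟨a, b, ha, hb, hsub, hmul⟩ :=
    exists_quadratic_roots_of_neg_at_zero_one (p := ω ^ 2 - 1) (q := g - ω ^ 2)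
      (by nlinarith [sq_nonneg ω]) (by linarith)
  refine ⟨√a, √b, by simpa using Real.sqrt_lt_sqrt zero_le_one ha, Real.sqrt_pos.2 hb,
    fun z => ?_⟩
  have hρ : ((√a : ℝ) : ℂ) ^ 2 = a := by
    rw [← ofReal_pow, Real.sq_sqrt (by linarith)]
  have hs : ((√b : ℝ) : ℂ) ^ 2 = b := by
    rw [← ofReal_pow, Real.sq_sqrt hb.le]
  have hcoeff : z ^ 4 + ((ω : ℂ) ^ 2 - 1) * z ^ 2 + ((g : ℂ) - (ω : ℂ) ^ 2)
      = z ^ 4 + ((√b : ℂ) ^ 2 - (√a : ℂ) ^ 2) * z ^ 2 - (√a : ℂ) ^ 2 * (√b : ℂ) ^ 2 := by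
    rw [hρ, hs]
    have hsubC : (b : ℂ) - a = ω ^ 2 - 1 := by exact_mod_cast hsub
    have hmulC : (a : ℂ) * b = -(g - ω ^ 2) := by exact_mod_cast hmul
    linear_combination -z ^ 2 * hsubC + hmulC
  rw [hcoeff, quartic_eq_zero_iff]
end

section
/- Let g ∈ ℝ, r ∈ ℂ with |Re r| < 1, and σ ∈ ℝ with σ ≠ 0. Let θ(σ) = 1 if σ ≥ 0 and θ(σ) = 0 otherwise, and sign(σ) = σ/|σ|. Then (g/4)·θ(σ)·∫_ℝ e^{−|ζ|} e^{r(σ−ζ)} dζ − (g/4)·∫_0^∞ e^{−|ζ−σ|} e^{rζ} dζ = (g/4) · e^{−|σ|} / (r + sign(σ)). -/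
/-!
Substituting `ζ ↦ σ - ζ` turns the convolution into `∫ e^{-|ζ-σ|} e^{rζ} dζ` over `ℝ`, the
integrand of the second term, which is integrable because `|Re r| < 1`. For `σ < 0` only the
half-line integral survives, and there the integrand is `e^σ e^{(r-1)ζ}`. For `σ > 0` the
difference is the integral over `(-∞, 0]`, where the integrand is `e^{-σ} e^{(1+r)ζ}`.
-/

open MeasureTheory Set

lemma exp_neg_abs_sub_mul_cexp_of_le {σ ζ : ℝ} (h : σ ≤ ζ) (r : ℂ) :
    (Real.exp (-|ζ - σ|) : ℂ) * Complex.exp (r * ζ)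
      = Complex.exp σ * Complex.exp ((r - 1) * ζ) := by
  rw [abs_of_nonneg (sub_nonneg.mpr h), Complex.ofReal_exp, ← Complex.exp_add, ← Complex.exp_add]
  push_cast
  ring_nf

lemma exp_neg_abs_sub_mul_cexp_of_ge {σ ζ : ℝ} (h : ζ ≤ σ) (r : ℂ) :
    (Real.exp (-|ζ - σ|) : ℂ) * Complex.exp (r * ζ)
      = Complex.exp (-σ) * Complex.exp ((1 + r) * ζ) := by
  rw [abs_of_nonpos (sub_nonpos.mpr h), Complex.ofReal_exp, ← Complex.exp_add, ← Complex.exp_add]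
  push_cast
  ring_nf

section

variable {r : ℂ} {σ a : ℝ}

lemma integrableOn_Ioi_exp_neg_abs_sub_mul_cexp (hr : r.re < 1) (h : σ ≤ a) :
    IntegrableOn (fun ζ : ℝ => (Real.exp (-|ζ - σ|) : ℂ) * Complex.exp (r * ζ)) (Ioi a) :=
  IntegrableOn.congr_fun
    ((integrableOn_exp_mul_complex_Ioi (a := r - 1) (by simpa using hr) a).const_mul _)
    (fun ζ hζ => (exp_neg_abs_sub_mul_cexp_of_le (h.trans (mem_Ioi.mp hζ).le) r).symm)
    measurableSet_Ioi

lemma integrableOn_Iic_exp_neg_abs_sub_mul_cexp (hr : -1 < r.re) (h : a ≤ σ) :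
    IntegrableOn (fun ζ : ℝ => (Real.exp (-|ζ - σ|) : ℂ) * Complex.exp (r * ζ)) (Iic a) :=
  IntegrableOn.congr_fun
    ((integrableOn_exp_mul_complex_Iic (a := 1 + r) (by simp; linarith) a).const_mul _)
    (fun ζ hζ => (exp_neg_abs_sub_mul_cexp_of_ge ((mem_Iic.mp hζ).trans h) r).symm)
    measurableSet_Iic

lemma integrable_exp_neg_abs_sub_mul_cexp (hr : |r.re| < 1) (σ : ℝ) :
    Integrable fun ζ : ℝ => (Real.exp (-|ζ - σ|) : ℂ) * Complex.exp (r * ζ) := by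
  rw [← integrableOn_univ, ← Iic_union_Ioi (a := σ), integrableOn_union]
  exact ⟨integrableOn_Iic_exp_neg_abs_sub_mul_cexp (abs_lt.mp hr).1 le_rfl,
    integrableOn_Ioi_exp_neg_abs_sub_mul_cexp (abs_lt.mp hr).2 le_rfl⟩

lemma integral_Ioi_exp_neg_abs_sub_mul_cexp (hr : r.re < 1) (h : σ ≤ a) :
    ∫ ζ in Ioi a, (Real.exp (-|ζ - σ|) : ℂ) * Complex.exp (r * ζ)
      = -Complex.exp σ * Complex.exp ((r - 1) * a) / (r - 1) := by
  rw [setIntegral_congr_fun measurableSet_Ioi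
      (fun ζ hζ => exp_neg_abs_sub_mul_cexp_of_le (h.trans (mem_Ioi.mp hζ).le) r),
    integral_const_mul, integral_exp_mul_complex_Ioi (by simpa using hr)]
  ring

lemma integral_Iic_exp_neg_abs_sub_mul_cexp (hr : -1 < r.re) (h : a ≤ σ) :
    ∫ ζ in Iic a, (Real.exp (-|ζ - σ|) : ℂ) * Complex.exp (r * ζ)
      = Complex.exp (-σ) * Complex.exp ((1 + r) * a) / (1 + r) := by
  rw [setIntegral_congr_fun measurableSet_Iic
      (fun ζ hζ => exp_neg_abs_sub_mul_cexp_of_ge ((mem_Iic.mp hζ).trans h) r),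
    integral_const_mul, integral_exp_mul_complex_Iic (by simp; linarith)]
  ring

end

lemma integral_exp_neg_abs_mul_cexp_sub_s9 (r : ℂ) (σ : ℝ) :
    ∫ ζ : ℝ, (Real.exp (-|ζ|) : ℂ) * Complex.exp (r * (σ - ζ))
      = ∫ ζ : ℝ, (Real.exp (-|ζ - σ|) : ℂ) * Complex.exp (r * ζ) := by
  rw [← integral_sub_left_eq_self _ volume σ]
  simp [abs_sub_comm]

/-- Canonical momentum density of the non-local harmonic oscillator (kernel e^{−|ζ|})
on the exponential trajectory q(σ) = e^{rσ}, away from the Dirac-delta at σ = 0: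
(g/4)θ(σ)(K∗q)(σ) − (g/4)∫₀^∞ K(ζ−σ)q(ζ)dζ = (g/4) e^{−|σ|}/(r + sign σ). -/
theorem stmt9 (g : ℝ) (r : ℂ) (hr : |r.re| < 1) (σ : ℝ) (hσ : σ ≠ 0) :
    ((g : ℂ) / 4) * (if 0 ≤ σ then (1 : ℂ) else 0) *
        (∫ ζ : ℝ, (Real.exp (-|ζ|) : ℂ) * Complex.exp (r * ((σ : ℂ) - ζ)))
      - ((g : ℂ) / 4) *
        (∫ ζ in Set.Ioi (0 : ℝ), (Real.exp (-|ζ - σ|) : ℂ) * Complex.exp (r * ζ))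
      = ((g : ℂ) / 4) * (Real.exp (-|σ|) : ℂ) / (r + ((σ / |σ| : ℝ) : ℂ)) := by
  obtain ⟨hr₁, hr₂⟩ := abs_lt.mp hr
  rw [integral_exp_neg_abs_mul_cexp_sub_s9]
  rcases hσ.lt_or_gt with hσ | hσ
  · have hr_ne : r - 1 ≠ 0 := fun h => by simp [sub_eq_zero.mp h] at hr₂
    rw [if_neg hσ.not_ge, integral_Ioi_exp_neg_abs_sub_mul_cexp hr₂ hσ.le, abs_of_neg hσ,
      div_neg, div_self hσ.ne, neg_neg]
    simp only [Complex.ofReal_zero, mul_zero, zero_mul, zero_sub, Complex.exp_zero,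
      Complex.ofReal_exp, Complex.ofReal_neg, Complex.ofReal_one, ← sub_eq_add_neg]
    field_simp
  · have hint := integrable_exp_neg_abs_sub_mul_cexp hr σ
    rw [if_pos hσ.le, ← intervalIntegral.integral_Iic_add_Ioi hint.integrableOn hint.integrableOn,
      integral_Iic_exp_neg_abs_sub_mul_cexp hr₁ hσ.le, abs_of_pos hσ, div_self hσ.ne']
    simp only [Complex.ofReal_zero, mul_zero, Complex.exp_zero, Complex.ofReal_exp,
      Complex.ofReal_neg, Complex.ofReal_one]
    ring
end

section
/- Let ω, s ∈ ℝ and set g = s². Suppose q, p, π, ξ : ℝ → ℝ are differentiable functions satisfying the Hamilton equations q'(t) = p(t), p'(t) = −ω² q(t) + s·π(t), ξ'(t) = −s·q(t) + π(t), π'(t) = ξ(t) for all t ∈ ℝ. Then q is four times differentiable and q⁗(t) + (ω² − 1) q''(t) + (g − ω²) q(t) = 0 for all t ∈ ℝ. -/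
/-!
Differentiating the Hamilton equations along the chain q' = p, p' = a, a' = b, b' = c with
a = -ω²q + sπ, b = -ω²p + sξ, c = -ω²a + s(-sq + π) exhibits q as four times differentiable
with q'' = a and q⁗ = c. Eliminating sπ = a + ω²q from c gives the Lagrange equation.
-/

section HasDerivChain

variable {𝕜 F : Type*} [NontriviallyNormedField 𝕜] [NormedAddCommGroup F] [NormedSpace 𝕜 F]
  {f f' : 𝕜 → F}

theorem iteratedDeriv_succ_of_hasDerivAt (hf : ∀ x, HasDerivAt f (f' x) x) (n : ℕ) :
    iteratedDeriv (n + 1) f = iteratedDeriv n f' := by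
  rw [iteratedDeriv_succ', funext fun x => (hf x).deriv]

theorem contDiff_succ_of_hasDerivAt {n : ℕ} (hf : ∀ x, HasDerivAt f (f' x) x)
    (hf' : ContDiff 𝕜 n f') : ContDiff 𝕜 (n + 1 : ℕ) f := by
  rw [Nat.cast_succ, contDiff_succ_iff_deriv, funext fun x => (hf x).deriv]
  exact ⟨fun x => (hf x).differentiableAt, fun h => absurd h (by simp), hf'⟩

end HasDerivChain

/-- The Hamilton equations of the reduced Hamiltonian
h = p²/2 + (ω²/2)q² − √g·qπ + π²/2 − ξ²/2 (with g = s², canonical pairs (q,p) and (ξ,π))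
imply the fourth-order Lagrange equation q⁗ + (ω²−1)q̈ + (g−ω²)q = 0. -/
theorem stmt10 (ω s g : ℝ) (hg : g = s ^ 2)
    (q p P X : ℝ → ℝ)
    (hq : ∀ t : ℝ, HasDerivAt q (p t) t)
    (hp : ∀ t : ℝ, HasDerivAt p (-(ω ^ 2) * q t + s * P t) t)
    (hX : ∀ t : ℝ, HasDerivAt X (-s * q t + P t) t)
    (hP : ∀ t : ℝ, HasDerivAt P (X t) t) :
    ContDiff ℝ 4 q ∧
    ∀ t : ℝ, iteratedDeriv 4 q t + (ω ^ 2 - 1) * iteratedDeriv 2 q t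
      + (g - ω ^ 2) * q t = 0 := by
  set a : ℝ → ℝ := fun t => -(ω ^ 2) * q t + s * P t
  set b : ℝ → ℝ := fun t => -(ω ^ 2) * p t + s * X t
  set c : ℝ → ℝ := fun t => -(ω ^ 2) * a t + s * (-s * q t + P t)
  have ha : ∀ t, HasDerivAt a (b t) t := fun t =>
    ((hq t).const_mul _).add ((hP t).const_mul _)
  have hb : ∀ t, HasDerivAt b (c t) t := fun t =>
    ((hp t).const_mul _).add ((hX t).const_mul _)
  have hc : Continuous c := by
    have hq_cont : Continuous q := continuous_iff_continuousAt.2 fun t => (hq t).continuousAt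
    have hP_cont : Continuous P := continuous_iff_continuousAt.2 fun t => (hP t).continuousAt
    fun_prop
  have q_iter2 : iteratedDeriv 2 q = a := by
    rw [iteratedDeriv_succ_of_hasDerivAt hq, iteratedDeriv_succ_of_hasDerivAt hp,
      iteratedDeriv_zero]
  have q_iter4 : iteratedDeriv 4 q = c := by
    rw [iteratedDeriv_succ_of_hasDerivAt hq, iteratedDeriv_succ_of_hasDerivAt hp,
      iteratedDeriv_succ_of_hasDerivAt ha, iteratedDeriv_succ_of_hasDerivAt hb, iteratedDeriv_zero]
  refine ⟨contDiff_succ_of_hasDerivAt hq <| contDiff_succ_of_hasDerivAt hp <|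
    contDiff_succ_of_hasDerivAt ha <| contDiff_succ_of_hasDerivAt hb <| contDiff_zero.2 hc,
    fun t => ?_⟩
  simp only [q_iter2, q_iter4, c, a, hg]
  ring
end

section
/- Let κ, T ∈ ℝ and α, β ∈ ℂ with α + β ≠ 0. If 1 − α² − 2κ cos(αT) = 0 and 1 − β² − 2κ cos(βT) = 0, then iα − iκ·(e^{iβT} − e^{−iαT})/(α+β) = iβ − iκ·(e^{iαT} − e^{−iβT})/(α+β). -/
open Complex

theorem mul_exp_add_exp_neg_eq_one_sub_sq {κ T α : ℂ}
    (hα : 1 - α ^ 2 - 2 * κ * cos (α * T) = 0) :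
    κ * (exp (I * α * T) + exp (-(I * α * T))) = 1 - α ^ 2 := by
  have h := two_cos (α * T)
  rw [show α * T * I = I * α * T by ring, show -(α * T) * I = -(I * α * T) by ring] at h
  linear_combination -κ * h - hα

/-- Symmetry ω_{αβ} = ω_{βα} of the symplectic-form coefficients of the delayed
non-local harmonic oscillator for spectral roots α, β with α + β ≠ 0. -/
theorem stmt13 (κ T : ℝ) (α β : ℂ) (hαβ : α + β ≠ 0)
    (hα : 1 - α ^ 2 - 2 * (κ : ℂ) * Complex.cos (α * T) = 0)
    (hβ : 1 - β ^ 2 - 2 * (κ : ℂ) * Complex.cos (β * T) = 0) :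
    Complex.I * α - Complex.I * (κ : ℂ) *
        (Complex.exp (Complex.I * β * T) - Complex.exp (-(Complex.I * α * T))) / (α + β)
      = Complex.I * β - Complex.I * (κ : ℂ) *
        (Complex.exp (Complex.I * α * T) - Complex.exp (-(Complex.I * β * T))) / (α + β) := by
  have eα := mul_exp_add_exp_neg_eq_one_sub_sq hα
  have eβ := mul_exp_add_exp_neg_eq_one_sub_sq hβ
  field_simp
  -- After clearing `α + β`, the two sides differ by `(α² + κ (e^{iαT} + e^{-iαT}))`
  -- minus the same expression in `β`, and both of these equal `1`.
  linear_combination eα - eβ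
end

section
/- Let κ, T ∈ ℝ and α, β ∈ ℂ with α + β ≠ 0. If 1 − α² − 2κ cos(αT) = 0 and 1 − β² − 2κ cos(βT) = 0, then [ (1−αβ)/2 − κ e^{iαT} + κβ·(e^{iβT} − e^{−iαT})/(α+β) ] + [ (1−αβ)/2 − κ e^{iβT} + κα·(e^{iαT} − e^{−iβT})/(α+β) ] = 0. -/
/-! Clearing the denominator α + β, the exponential terms pair up into
β (e^{iαT} + e^{-iαT}) + α (e^{iβT} + e^{-iβT}) = 2β cos(αT) + 2α cos(βT), so the sum equals
(1 - αβ) - κ (2β cos(αT) + 2α cos(βT)) / (α + β). On spectral roots 2κ cos(αT) = 1 - α², and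
β (1 - α²) + α (1 - β²) = (α + β)(1 - αβ). -/

open Complex

lemma two_mul_cos_mul_ofReal (z : ℂ) (t : ℝ) :
    2 * cos (z * t) = exp (I * z * t) + exp (-(I * z * t)) := by
  rw [two_cos]
  ring_nf

lemma hamiltonian_coeff_symm_eq (κ T : ℝ) {α β : ℂ} (hαβ : α + β ≠ 0) :
    ((1 - α * β) / 2 - (κ : ℂ) * exp (I * α * T)
        + (κ : ℂ) * β * (exp (I * β * T) - exp (-(I * α * T))) / (α + β))
      + ((1 - α * β) / 2 - (κ : ℂ) * exp (I * β * T)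
        + (κ : ℂ) * α * (exp (I * α * T) - exp (-(I * β * T))) / (α + β))
      = (1 - α * β)
        - κ * (β * (2 * cos (α * T)) + α * (2 * cos (β * T))) / (α + β) := by
  rw [two_mul_cos_mul_ofReal, two_mul_cos_mul_ofReal]
  field_simp
  ring

/-- Vanishing of the symmetrization h_{αβ} + h_{βα} of the Hamiltonian coefficients of
the delayed non-local harmonic oscillator for spectral roots α, β with α + β ≠ 0. -/
theorem stmt14 (κ T : ℝ) (α β : ℂ) (hαβ : α + β ≠ 0)
    (hα : 1 - α ^ 2 - 2 * (κ : ℂ) * Complex.cos (α * T) = 0)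
    (hβ : 1 - β ^ 2 - 2 * (κ : ℂ) * Complex.cos (β * T) = 0) :
    ((1 - α * β) / 2 - (κ : ℂ) * Complex.exp (Complex.I * α * T)
        + (κ : ℂ) * β *
          (Complex.exp (Complex.I * β * T) - Complex.exp (-(Complex.I * α * T))) / (α + β))
      + ((1 - α * β) / 2 - (κ : ℂ) * Complex.exp (Complex.I * β * T)
        + (κ : ℂ) * α *
          (Complex.exp (Complex.I * α * T) - Complex.exp (-(Complex.I * β * T))) / (α + β))
      = 0 := by
  rw [hamiltonian_coeff_symm_eq κ T hαβ, sub_eq_zero, eq_div_iff hαβ]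
  linear_combination β * hα + α * hβ
end

section
/- Let r > 0 be real and α, β ∈ ℂ. If e^{−rα²} = 2 and e^{−rβ²} = 2, then e^{−r(α+β)²} ≠ 2. -/
/-!
Taking absolute values in `exp (-r z²) = 2` gives `Re (z²) = -log 2 / r`, so a spectral root
lies on the hyperbola `Re (z²) = x` with `x ≠ 0`. That hyperbola is sum-free: if `α`, `β` and
`α + β` all lie on it, then `Re (αβ) = -x/2`, and comparing real and imaginary parts of
`(αβ)² = α²β²` yields `3x²/4 + s² + st + t² = 0` with `s = Im α²`, `t = Im β²`, forcing `x = 0`.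
-/

theorem Complex.re_sq_eq_zero_of_re_sq_eq (α β : ℂ) (hβ : (β ^ 2).re = (α ^ 2).re)
    (hαβ : ((α + β) ^ 2).re = (α ^ 2).re) : (α ^ 2).re = 0 := by
  obtain ⟨a, b⟩ := α
  obtain ⟨c, d⟩ := β
  simp only [sq, Complex.mul_re, Complex.add_re, Complex.add_im] at hβ hαβ ⊢
  nlinarith [sq_nonneg (a * b + c * d), sq_nonneg (a * d + b * c)]

theorem Complex.re_eq_log_norm_of_exp_eq {z w : ℂ} (h : Complex.exp z = w) :
    z.re = Real.log ‖w‖ := by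
  rw [← h, Complex.norm_exp, Real.log_exp]

/-- The spectral set {α : e^{−rα²} = 2} of the p-adic particle (p = 2) is sum-free:
the sum of two spectral roots is never a spectral root. -/
theorem stmt18 (r : ℝ) (hr : 0 < r) (α β : ℂ)
    (hα : Complex.exp (-(r : ℂ) * α ^ 2) = 2)
    (hβ : Complex.exp (-(r : ℂ) * β ^ 2) = 2) :
    Complex.exp (-(r : ℂ) * (α + β) ^ 2) ≠ 2 := by
  have re_sq_of_root {z : ℂ} (hz : Complex.exp (-(r : ℂ) * z ^ 2) = 2) :
      r * (z ^ 2).re = -Real.log 2 := by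
    have := Complex.re_eq_log_norm_of_exp_eq hz
    rw [neg_mul, Complex.neg_re, Complex.re_ofReal_mul, Complex.norm_two] at this
    linarith
  intro hαβ
  have hzero : (α ^ 2).re = 0 :=
    Complex.re_sq_eq_zero_of_re_sq_eq α β
      (mul_left_cancel₀ hr.ne' ((re_sq_of_root hβ).trans (re_sq_of_root hα).symm))
      (mul_left_cancel₀ hr.ne' ((re_sq_of_root hαβ).trans (re_sq_of_root hα).symm))
  have hα' := re_sq_of_root hα
  rw [hzero, mul_zero, zero_eq_neg] at hα'
  exact Real.log_ne_zero_of_pos_of_ne_one two_pos (by norm_num) hα'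
end

section
/- Let r > 0 be real and α, β, γ ∈ ℂ. If e^{−rα²} = 2, e^{−rβ²} = 2, and e^{−rγ²} = 2, then α + β + γ ≠ 0. -/
/-!
Taking absolute values in `exp (-r α²) = 2` gives `Re (α²) = -log 2 / r`, a nonzero constant `c`
shared by all three roots. The form `z ↦ Re (z²)` on `ℝ²` has signature `(1, 1)`, so the Gram
determinant `Re (α²) Re (β²) - Re (αβ)²` of any two vectors is `≤ 0`. If `α + β + γ = 0`,
polarisation gives `Re (αβ) = -c / 2`, and the Gram determinant is `3c²/4 > 0`.
-/

namespace Complex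

theorem re_sq_mul_re_sq_le_sq_re_mul (α β : ℂ) : (α ^ 2).re * (β ^ 2).re ≤ ((α * β).re) ^ 2 := by
  have gram : ((α * β).re) ^ 2 - (α ^ 2).re * (β ^ 2).re = (α.re * β.im - α.im * β.re) ^ 2 := by
    simp only [sq, mul_re]
    ring
  nlinarith [sq_nonneg (α.re * β.im - α.im * β.re)]

theorem re_sq_eq_zero_of_add_add_eq_zero {α β γ : ℂ} (h : α + β + γ = 0)
    (hβ : (β ^ 2).re = (α ^ 2).re) (hγ : (γ ^ 2).re = (α ^ 2).re) : (α ^ 2).re = 0 := by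
  have polar : (α * β).re = -(α ^ 2).re / 2 := by
    have hγ' : γ = -(α + β) := by linear_combination h
    rw [hγ'] at hγ
    have : ((-(α + β)) ^ 2).re = (α ^ 2).re + 2 * (α * β).re + (β ^ 2).re := by
      simp only [sq, mul_re, neg_re, neg_im, add_re, add_im]
      ring
    linarith
  have := re_sq_mul_re_sq_le_sq_re_mul α β
  rw [hβ, polar] at this
  nlinarith [sq_nonneg (α ^ 2).re]

theorem re_sq_eq_of_exp_neg_mul_sq_eq {r : ℝ} (hr : r ≠ 0) {z w : ℂ}
    (h : exp (-(r : ℂ) * z ^ 2) = w) : (z ^ 2).re = -Real.log ‖w‖ / r := by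
  rw [← h, norm_exp, Real.log_exp, neg_mul, neg_re, re_ofReal_mul]
  field_simp

end Complex

/-- No three spectral roots of the p-adic particle (p = 2) sum to zero. -/
theorem stmt19 (r : ℝ) (hr : 0 < r) (α β γ : ℂ)
    (hα : Complex.exp (-(r : ℂ) * α ^ 2) = 2)
    (hβ : Complex.exp (-(r : ℂ) * β ^ 2) = 2)
    (hγ : Complex.exp (-(r : ℂ) * γ ^ 2) = 2) :
    α + β + γ ≠ 0 := by
  intro h
  have hα' := Complex.re_sq_eq_of_exp_neg_mul_sq_eq hr.ne' hα
  have hc : (α ^ 2).re ≠ 0 := by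
    rw [hα', Complex.norm_ofNat]
    exact div_ne_zero (neg_ne_zero.mpr (Real.log_pos one_lt_two).ne') hr.ne'
  refine hc (Complex.re_sq_eq_zero_of_add_add_eq_zero h ?_ ?_)
  · rw [Complex.re_sq_eq_of_exp_neg_mul_sq_eq hr.ne' hβ, hα']
  · rw [Complex.re_sq_eq_of_exp_neg_mul_sq_eq hr.ne' hγ, hα']
end
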